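/- If 18 teams from one continent are distributed into 8 groups of 4, the total number of intra-continental matches among those 18 teams is minimized exactly when every group contains either 2 or 3 of them, and the minimum equals 12 (six groups with 2 teams and two groups with 3 teams). -/

import Mathlib

open Finset

/-! For every `n`, `2 n ≤ C(n, 2) + 3`, with equality exactly at `n = 2, 3`, since
`C(n, 2) + 3 - 2 n = (n - 2)(n - 3) / 2`. Summing this tangent-line bound over the 8 groups gives
`2 · 18 ≤ (number of intra-continental matches) + 3 · 8`, so at least 12 matches, with equality
exactly when every group holds 2 or 3 of the teams. -/

namespace Nat

theorem two_mul_lt_choose_two_add_three {n : ℕ} (hn : 4 ≤ n) : 2 * n < n.choose 2 + 3 := by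
  obtain ⟨m, rfl⟩ := exists_add_of_le hn
  have : 2 * (m + 3) ≤ (4 + m).choose 2 := by
    rw [choose_two_right, le_div_iff_mul_le two_pos, show 4 + m - 1 = m + 3 by omega]
    nlinarith
  omega

theorem two_mul_le_choose_two_add_three (n : ℕ) : 2 * n ≤ n.choose 2 + 3 := by
  rcases lt_or_ge n 4 with hn | hn
  · interval_cases n <;> decide
  · exact (two_mul_lt_choose_two_add_three hn).le

theorem choose_two_add_three_eq_two_mul_iff {n : ℕ} : n.choose 2 + 3 = 2 * n ↔ n = 2 ∨ n = 3 := by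
  rcases lt_or_ge n 4 with hn | hn
  · interval_cases n <;> decide
  · have := two_mul_lt_choose_two_add_three hn
    omega

end Nat

namespace Finset

variable {ι : Type*} (s : Finset ι) (k : ι → ℕ)

theorem two_mul_sum_le_sum_choose_two_add :
    2 * ∑ i ∈ s, k i ≤ ∑ i ∈ s, (k i).choose 2 + 3 * #s := by
  rw [mul_sum, card_eq_sum_ones, mul_sum, ← sum_add_distrib]
  exact sum_le_sum fun i _ => by simpa using Nat.two_mul_le_choose_two_add_three (k i)

theorem sum_choose_two_add_eq_two_mul_sum_iff :
    ∑ i ∈ s, (k i).choose 2 + 3 * #s = 2 * ∑ i ∈ s, k i ↔ ∀ i ∈ s, k i = 2 ∨ k i = 3 := by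
  rw [mul_sum, card_eq_sum_ones, mul_sum, ← sum_add_distrib, eq_comm,
    sum_eq_sum_iff_of_le fun i _ => by simpa using Nat.two_mul_le_choose_two_add_three (k i)]
  simp only [mul_one, eq_comm (a := 2 * _), Nat.choose_two_add_three_eq_two_mul_iff]

end Finset

/-- 18 teams from one continent distributed into 8 groups of capacity 4:
the total number of intra-continental matches `∑ kᵢ(kᵢ-1)/2` is minimized
exactly when every group has 2 or 3 of them, and the minimum equals 12. -/
theorem stmt_1 :
    (∀ k : Fin 8 → ℕ, (∀ i, k i ≤ 4) → (∑ i, k i) = 18 →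
      (12 ≤ ∑ i, k i * (k i - 1) / 2 ∧
        ((∑ i, k i * (k i - 1) / 2) = 12 ↔ ∀ i, k i = 2 ∨ k i = 3))) ∧
    (∃ k : Fin 8 → ℕ, (∀ i, k i ≤ 4) ∧ (∑ i, k i) = 18 ∧
      ({i | k i = 2} : Finset (Fin 8)).card = 6 ∧
      ({i | k i = 3} : Finset (Fin 8)).card = 2 ∧
      (∑ i, k i * (k i - 1) / 2) = 12) := by
  refine ⟨fun k _ hsum => ?_,
    ⟨fun i => if (i : ℕ) < 6 then 2 else 3, by decide, by decide, by decide, by decide, by decide⟩⟩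
  simp only [← Nat.choose_two_right]
  have hle := two_mul_sum_le_sum_choose_two_add univ k
  have hiff := sum_choose_two_add_eq_two_mul_sum_iff univ k
  simp only [hsum, card_univ, Fintype.card_fin, mem_univ, true_implies] at hle hiff
  exact ⟨by omega, by rw [← hiff]; omega⟩
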